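/- The matrices S₈ = T⁻¹ S T⁻¹⁰ S T⁻¹ S T⁻¹⁶², T₈ = T⁹, S₉ = T⁻¹ S T⁻⁶⁵ S T⁻¹ S T¹⁰⁹⁶, T₉ = T⁻⁸ in SL₂(ℤ) satisfy: S₈ commutes with S₉ modulo 72, S₈ commutes with T₉ modulo 72, T₈ commutes with S₉ modulo 72, and T₈ commutes with T₉ modulo 72 (i.e., the products in either order are entrywise congruent mod 72). -/

import Mathlib

open Matrix

/-- `S = [[0,-1],[1,0]]` in `SL₂(ℤ)`. -/
def Sm : Matrix.SpecialLinearGroup (Fin 2) ℤ :=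
  ⟨!![0, -1; 1, 0], by norm_num [Matrix.det_fin_two_of]⟩

/-- `T = [[1,1],[0,1]]` in `SL₂(ℤ)`. -/
def Tm : Matrix.SpecialLinearGroup (Fin 2) ℤ :=
  ⟨!![1, 1; 0, 1], by norm_num [Matrix.det_fin_two_of]⟩

/-- `S₈ = T⁻¹ S T⁻¹⁰ S T⁻¹ S T⁻¹⁶²`. -/
def S8 : Matrix.SpecialLinearGroup (Fin 2) ℤ :=
  Tm⁻¹ * Sm * Tm ^ (-10 : ℤ) * Sm * Tm⁻¹ * Sm * Tm ^ (-162 : ℤ)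

/-- `T₈ = T⁹`. -/
def T8 : Matrix.SpecialLinearGroup (Fin 2) ℤ := Tm ^ (9 : ℤ)

/-- `S₉ = T⁻¹ S T⁻⁶⁵ S T⁻¹ S T¹⁰⁹⁶`. -/
def S9 : Matrix.SpecialLinearGroup (Fin 2) ℤ :=
  Tm⁻¹ * Sm * Tm ^ (-65 : ℤ) * Sm * Tm⁻¹ * Sm * Tm ^ (1096 : ℤ)

/-- `T₉ = T⁻⁸`. -/
def T9 : Matrix.SpecialLinearGroup (Fin 2) ℤ := Tm ^ (-8 : ℤ)

lemma Tm_npow (n : ℕ) : (Tm ^ n).1 = !![1, (n : ℤ); 0, 1] := by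
  induction n with
  | zero => simp [Matrix.one_fin_two]
  | succ k ih =>
    rw [pow_succ, Matrix.SpecialLinearGroup.coe_mul, ih]
    show _ = !![(1 : ℤ), ((k : ℤ) + 1); 0, 1]
    simp [Tm, Matrix.mul_fin_two, add_comm]

lemma Tm_inv : Tm⁻¹ = (⟨!![1, -1; 0, 1], by norm_num [Matrix.det_fin_two_of]⟩ :
    Matrix.SpecialLinearGroup (Fin 2) ℤ) := by
  refine inv_eq_iff_mul_eq_one.mpr ?_
  ext i j
  show (Tm.1 * !![(1 : ℤ), -1; 0, 1]) i j = (1 : Matrix (Fin 2) (Fin 2) ℤ) i j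
  fin_cases i <;> fin_cases j <;>
    simp [Tm, Matrix.mul_fin_two, Matrix.one_fin_two]

lemma Tm_zpow (n : ℤ) : (Tm ^ n).1 = !![1, n; 0, 1] := by
  obtain ⟨m, rfl | rfl⟩ := n.eq_nat_or_neg
  · rw [zpow_natCast, Tm_npow]
  · rw [_root_.zpow_neg, zpow_natCast, ← inv_pow]
    have : (Tm⁻¹ ^ m).1 = !![1, -(m : ℤ); 0, 1] := by
      induction m with
      | zero => simp [Matrix.one_fin_two]
      | succ k ih =>
        rw [pow_succ, Matrix.SpecialLinearGroup.coe_mul, ih, Tm_inv]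
        show _ = !![(1 : ℤ), -((k : ℤ) + 1); 0, 1]
        simp [Matrix.mul_fin_two]
    rw [this]

lemma S8_eq : S8.1 = !![-8, 1287; 9, -1448] := by
  show (Tm⁻¹ * Sm * Tm ^ (-10 : ℤ) * Sm * Tm⁻¹ * Sm * Tm ^ (-162 : ℤ)).1 = _
  rw [show Tm⁻¹ = Tm ^ (-1 : ℤ) by simp]
  simp only [Matrix.SpecialLinearGroup.coe_mul, Tm_zpow]
  norm_num [Sm, Matrix.mul_fin_two]

lemma S9_eq : S9.1 = !![-63, -69112; 64, 70209] := by
  show (Tm⁻¹ * Sm * Tm ^ (-65 : ℤ) * Sm * Tm⁻¹ * Sm * Tm ^ (1096 : ℤ)).1 = _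
  rw [show Tm⁻¹ = Tm ^ (-1 : ℤ) by simp]
  simp only [Matrix.SpecialLinearGroup.coe_mul, Tm_zpow]
  norm_num [Sm, Matrix.mul_fin_two]

theorem S8_T8_commute_S9_T9_mod72 :
    (∀ i j, (S8 * S9).1 i j ≡ (S9 * S8).1 i j [ZMOD 72]) ∧
    (∀ i j, (S8 * T9).1 i j ≡ (T9 * S8).1 i j [ZMOD 72]) ∧
    (∀ i j, (T8 * S9).1 i j ≡ (S9 * T8).1 i j [ZMOD 72]) ∧
    (∀ i j, (T8 * T9).1 i j ≡ (T9 * T8).1 i j [ZMOD 72]) := by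
  have hT8 : T8.1 = !![1, 9; 0, 1] := Tm_zpow 9
  have hT9 : T9.1 = !![1, -8; 0, 1] := Tm_zpow (-8)
  refine ⟨?_, ?_, ?_, ?_⟩ <;>
  · intro i j
    simp only [Matrix.SpecialLinearGroup.coe_mul, S8_eq, S9_eq, hT8, hT9]
    fin_cases i <;> fin_cases j  <;>
      simp [Matrix.mul_fin_two, Int.ModEq]
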